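/- Let N ∈ ℕ, let M be a real symmetric positive semidefinite N×N matrix and W a diagonal positive definite N×N matrix with W − M positive semidefinite, let α > 0, β > 0, and c, λ̃ ∈ ℝ^N. Then the function λ ↦ (1/(2α))(λ − c)ᵀ M (λ − c) + (1/(2α))(λ − λ̃)ᵀ (W − M)(λ − λ̃) has a unique minimizer over the box [−β, β]^N, given by λ* = Π_{[−β,β]}(λ̃ + W⁻¹ M (c − λ̃)), where Π_{[−β,β]} is the componentwise clamp to [−β, β]. -/

import Mathlib

/-!
Since `W = M + (W - M)`, completing the square turns the objective into
`(1/(2α)) ‖λ - z‖²_W + const`, where `z = λ̃ + W⁻¹ M (c - λ̃)` solves `W z = M c + (W - M) λ̃`.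
As `W` is diagonal with positive entries, `‖λ - z‖²_W = ∑ᵢ Wᵢᵢ (λᵢ - zᵢ)²` splits into
independent one-dimensional problems, each uniquely solved over `[-β, β]` by clamping `zᵢ`.
-/

open Matrix

/-- Componentwise clamp of a vector to the interval `[lo, hi]`. -/
def clampVec {N : ℕ} (lo hi : ℝ) (y : Fin N → ℝ) : Fin N → ℝ :=
  fun i => min (max (y i) lo) hi

namespace Matrix

variable {n R : Type*} [Fintype n] [CommRing R]

theorem IsSymm.dotProduct_mulVec_comm {A : Matrix n n R} (hA : A.IsSymm) (u v : n → R) :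
    v ⬝ᵥ A *ᵥ u = u ⬝ᵥ A *ᵥ v := by
  conv_lhs => rw [← hA.eq]
  exact dotProduct_transpose_mulVec A v u

theorem IsSymm.dotProduct_mulVec_add_self {A : Matrix n n R} (hA : A.IsSymm) (u v : n → R) :
    (u + v) ⬝ᵥ A *ᵥ (u + v) = u ⬝ᵥ A *ᵥ u + 2 * (u ⬝ᵥ A *ᵥ v) + v ⬝ᵥ A *ᵥ v := by
  simp only [mulVec_add, add_dotProduct, dotProduct_add, hA.dotProduct_mulVec_comm v u]
  ring

theorem IsSymm.dotProduct_mulVec_sub_add_dotProduct_mulVec_sub {A B : Matrix n n R}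
    (hA : A.IsSymm) (hB : B.IsSymm) {a b z : n → R}
    (hz : (A + B) *ᵥ z = A *ᵥ a + B *ᵥ b) (x : n → R) :
    (x - a) ⬝ᵥ A *ᵥ (x - a) + (x - b) ⬝ᵥ B *ᵥ (x - b)
      = (x - z) ⬝ᵥ (A + B) *ᵥ (x - z)
        + ((z - a) ⬝ᵥ A *ᵥ (z - a) + (z - b) ⬝ᵥ B *ᵥ (z - b)) := by
  have hcross : (x - z) ⬝ᵥ A *ᵥ (z - a) + (x - z) ⬝ᵥ B *ᵥ (z - b) = 0 := by
    rw [← dotProduct_add, mulVec_sub, mulVec_sub, sub_add_sub_comm, ← add_mulVec, hz,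
      sub_self, dotProduct_zero]
  rw [← sub_add_sub_cancel x z a, ← sub_add_sub_cancel x z b, hA.dotProduct_mulVec_add_self,
    hB.dotProduct_mulVec_add_self, add_mulVec, dotProduct_add]
  linear_combination 2 * hcross

theorem IsDiag.dotProduct_mulVec_self {W : Matrix n n R} (hW : W.IsDiag) (v : n → R) :
    v ⬝ᵥ W *ᵥ v = ∑ i, W i i * v i ^ 2 := by
  classical
  calc v ⬝ᵥ W *ᵥ v = v ⬝ᵥ diagonal W.diag *ᵥ v := by rw [hW.diagonal_diag]
    _ = ∑ i, W i i * v i ^ 2 := by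
      simp only [dotProduct, mulVec_diagonal, diag_apply]
      exact Finset.sum_congr rfl fun i _ => by ring

end Matrix

theorem clampVec_mem_Icc {N : ℕ} {lo hi : ℝ} (h : lo ≤ hi) (y : Fin N → ℝ) (i : Fin N) :
    clampVec lo hi y i ∈ Set.Icc lo hi :=
  ⟨le_min (le_max_right _ _) h, min_le_right _ _⟩

/- Pythagoras for the projection `p` of `z` onto an interval: `x - p` and `p - z` never point
in opposite directions. -/
theorem sq_sub_clamp_add_sq_le {lo hi x : ℝ} (hx : x ∈ Set.Icc lo hi) (z : ℝ) :
    (min (max z lo) hi - z) ^ 2 + (x - min (max z lo) hi) ^ 2 ≤ (x - z) ^ 2 := by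
  obtain ⟨hlo, hhi⟩ := hx
  have hangle : 0 ≤ (x - min (max z lo) hi) * (min (max z lo) hi - z) := by
    rcases le_total z lo with h | h
    · rw [max_eq_right h, min_eq_left (hlo.trans hhi)]
      exact mul_nonneg (by linarith) (by linarith)
    rcases le_total hi z with h' | h'
    · rw [max_eq_left h, min_eq_right h']
      exact mul_nonneg_of_nonpos_of_nonpos (by linarith) (by linarith)
    · rw [max_eq_left h, min_eq_left h', sub_self, mul_zero]
  nlinarith

section WeightedBoxProjection

variable {N : ℕ} {lo hi : ℝ} {w : Fin N → ℝ}

theorem sum_mul_sq_sub_clampVec_add_le (hw : ∀ i, 0 ≤ w i) {l : Fin N → ℝ}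
    (hl : ∀ i, l i ∈ Set.Icc lo hi) (z : Fin N → ℝ) :
    ∑ i, w i * (clampVec lo hi z i - z i) ^ 2 + ∑ i, w i * (l i - clampVec lo hi z i) ^ 2
      ≤ ∑ i, w i * (l i - z i) ^ 2 := by
  rw [← Finset.sum_add_distrib]
  refine Finset.sum_le_sum fun i _ => ?_
  rw [← mul_add]
  exact mul_le_mul_of_nonneg_left (sq_sub_clamp_add_sq_le (hl i) (z i)) (hw i)

theorem sum_mul_sq_sub_clampVec_le (hw : ∀ i, 0 ≤ w i) {l : Fin N → ℝ}
    (hl : ∀ i, l i ∈ Set.Icc lo hi) (z : Fin N → ℝ) :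
    ∑ i, w i * (clampVec lo hi z i - z i) ^ 2 ≤ ∑ i, w i * (l i - z i) ^ 2 :=
  le_trans (le_add_of_nonneg_right (Finset.sum_nonneg fun i _ => by have := hw i; positivity))
    (sum_mul_sq_sub_clampVec_add_le hw hl z)

theorem eq_clampVec_of_sum_mul_sq_le (hw : ∀ i, 0 < w i) {l : Fin N → ℝ}
    (hl : ∀ i, l i ∈ Set.Icc lo hi) {z : Fin N → ℝ}
    (hmin : ∑ i, w i * (l i - z i) ^ 2 ≤ ∑ i, w i * (clampVec lo hi z i - z i) ^ 2) :
    l = clampVec lo hi z := by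
  have hterm : ∀ i ∈ Finset.univ, 0 ≤ w i * (l i - clampVec lo hi z i) ^ 2 :=
    fun i _ => by have := hw i; positivity
  have hzero : ∑ i, w i * (l i - clampVec lo hi z i) ^ 2 = 0 :=
    le_antisymm (by linarith [sum_mul_sq_sub_clampVec_add_le (fun i => (hw i).le) hl z])
      (Finset.sum_nonneg hterm)
  funext i
  have hi := (Finset.sum_eq_zero_iff_of_nonneg hterm).mp hzero i (Finset.mem_univ i)
  rw [mul_eq_zero, or_iff_right (hw i).ne', sq_eq_zero_iff, sub_eq_zero] at hi
  exact hi

end WeightedBoxProjection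

/-- Closed-form solution of the λ-subproblem in the discretized sGS-majorized ABCD
algorithm: the unique minimizer over the box `[−β, β]^N` of
`λ ↦ (1/(2α))(λ−c)ᵀM(λ−c) + (1/(2α))(λ−λ̃)ᵀ(W−M)(λ−λ̃)` is
`λ* = Π_{[−β,β]}(λ̃ + W⁻¹ M (c − λ̃))`. -/
theorem lambda_subproblem_closed_form
    (N : ℕ) (M W : Matrix (Fin N) (Fin N) ℝ)
    (hMpsd : M.PosSemidef) (hWdiag : W.IsDiag) (hWpd : W.PosDef)
    (hWM : (W - M).PosSemidef)
    (α β : ℝ) (hα : 0 < α) (hβ : 0 < β) (c lamt : Fin N → ℝ) :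
    clampVec (-β) β (lamt + W⁻¹ *ᵥ (M *ᵥ (c - lamt))) ∈ {l : Fin N → ℝ | ∀ i, |l i| ≤ β} ∧
    (∀ l ∈ {l : Fin N → ℝ | ∀ i, |l i| ≤ β},
        (1 / (2 * α)) * ((clampVec (-β) β (lamt + W⁻¹ *ᵥ (M *ᵥ (c - lamt))) - c) ⬝ᵥ
            (M *ᵥ (clampVec (-β) β (lamt + W⁻¹ *ᵥ (M *ᵥ (c - lamt))) - c)))
          + (1 / (2 * α)) * ((clampVec (-β) β (lamt + W⁻¹ *ᵥ (M *ᵥ (c - lamt))) - lamt) ⬝ᵥ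
            ((W - M) *ᵥ (clampVec (-β) β (lamt + W⁻¹ *ᵥ (M *ᵥ (c - lamt))) - lamt)))
        ≤ (1 / (2 * α)) * ((l - c) ⬝ᵥ (M *ᵥ (l - c)))
          + (1 / (2 * α)) * ((l - lamt) ⬝ᵥ ((W - M) *ᵥ (l - lamt)))) ∧
    (∀ l' ∈ {l : Fin N → ℝ | ∀ i, |l i| ≤ β},
        (∀ l ∈ {l : Fin N → ℝ | ∀ i, |l i| ≤ β},
          (1 / (2 * α)) * ((l' - c) ⬝ᵥ (M *ᵥ (l' - c)))
            + (1 / (2 * α)) * ((l' - lamt) ⬝ᵥ ((W - M) *ᵥ (l' - lamt)))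
          ≤ (1 / (2 * α)) * ((l - c) ⬝ᵥ (M *ᵥ (l - c)))
            + (1 / (2 * α)) * ((l - lamt) ⬝ᵥ ((W - M) *ᵥ (l - lamt)))) →
        l' = clampVec (-β) β (lamt + W⁻¹ *ᵥ (M *ᵥ (c - lamt)))) := by
  set z := lamt + W⁻¹ *ᵥ (M *ᵥ (c - lamt))
  have hz : (M + (W - M)) *ᵥ z = M *ᵥ c + (W - M) *ᵥ lamt := by
    rw [add_sub_cancel, mulVec_add, mulVec_mulVec, mul_nonsing_inv W hWpd.det_pos.ne'.isUnit,
      one_mulVec, mulVec_sub, sub_mulVec]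
    abel
  obtain ⟨C, hobj⟩ : ∃ C, ∀ l : Fin N → ℝ,
      (1 / (2 * α)) * ((l - c) ⬝ᵥ (M *ᵥ (l - c)))
        + (1 / (2 * α)) * ((l - lamt) ⬝ᵥ ((W - M) *ᵥ (l - lamt)))
      = (1 / (2 * α)) * (∑ i, W i i * (l i - z i) ^ 2 + C) := by
    refine ⟨(z - c) ⬝ᵥ M *ᵥ (z - c) + (z - lamt) ⬝ᵥ (W - M) *ᵥ (z - lamt), fun l => ?_⟩
    rw [← mul_add, IsSymm.dotProduct_mulVec_sub_add_dotProduct_mulVec_sub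
      (isHermitian_iff_isSymm.mp hMpsd.isHermitian) (isHermitian_iff_isSymm.mp hWM.isHermitian)
      hz, add_sub_cancel, hWdiag.dotProduct_mulVec_self]
    rfl
  have hbox : ∀ l : Fin N → ℝ, l ∈ {l : Fin N → ℝ | ∀ i, |l i| ≤ β} ↔
      ∀ i, l i ∈ Set.Icc (-β) β := fun l => forall_congr' fun i => abs_le
  have hk : 0 < 1 / (2 * α) := by positivity
  simp only [hbox, hobj, mul_le_mul_iff_right₀ hk, add_le_add_iff_right]
  have hclamp_mem : ∀ i, clampVec (-β) β z i ∈ Set.Icc (-β) β := clampVec_mem_Icc (by linarith) z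
  exact ⟨hclamp_mem, fun l hl => sum_mul_sq_sub_clampVec_le (fun i => hWpd.diag_pos.le) hl z,
    fun l hl hmin => eq_clampVec_of_sum_mul_sq_le (fun i => hWpd.diag_pos) hl (hmin _ hclamp_mem)⟩
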